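/- arXiv:2504.02583 — 2 statements merged into one kernel-verified Lean document; each statement's English description precedes it below -/
import Mathlib

section
/- Let m,n be positive integers, A an m×n real matrix and γ ∈ [0,1)^m. Suppose ⟨Aq − γ⟩ > 0 for every q ∈ ℤ^n \ {0}. Then the series S_l(A,γ) := ∑_{t=l}^∞ t^{n-1} · (min_{q ∈ ℤ^n, l ≤ ‖q‖ ≤ t} ⟨Aq − γ⟩^m) either converges for all l ∈ ℕ or diverges for all l ∈ ℕ. -/
open Filter

/-- The supremum norm of an integer vector, as a natural number. -/
def znn {n : ℕ} (q : Fin n → ℤ) : ℕ := Finset.univ.sup fun i => (q i).natAbs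

/-- Supremum-norm distance of `y ∈ ℝ^m` to the integer lattice `ℤ^m`. -/
noncomputable def dz {m : ℕ} (y : Fin m → ℝ) : ℝ := ⨅ p : Fin m → ℤ, ‖y - fun i => (p i : ℝ)‖

/-- `⟨Aq - γ⟩`, the approximation error. -/
noncomputable def approxErr {m n : ℕ} (A : Matrix (Fin m) (Fin n) ℝ) (γ : Fin m → ℝ)
    (q : Fin n → ℤ) : ℝ := dz (A.mulVec (fun i => (q i : ℝ)) - γ)

/-- `min_{q ∈ ℤ^n, l ≤ ‖q‖ ≤ t} ⟨Aq - γ⟩^m`. -/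
noncomputable def minErr {m n : ℕ} (A : Matrix (Fin m) (Fin n) ℝ) (γ : Fin m → ℝ)
    (l t : ℕ) : ℝ :=
  sInf {x | ∃ q : Fin n → ℤ, l ≤ znn q ∧ znn q ≤ t ∧ x = approxErr A γ q ^ m}

section aux

variable {m n : ℕ} {A : Matrix (Fin m) (Fin n) ℝ} {γ : Fin m → ℝ}

lemma dz_nonneg (y : Fin m → ℝ) : 0 ≤ dz y :=
  Real.iInf_nonneg fun _ => norm_nonneg _

lemma errSet_nonneg {l t : ℕ} :
    ∀ x ∈ {x | ∃ q : Fin n → ℤ, l ≤ znn q ∧ znn q ≤ t ∧ x = approxErr A γ q ^ m}, 0 ≤ x := by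
  rintro x ⟨q, -, -, rfl⟩
  exact pow_nonneg (dz_nonneg _) m

lemma errSet_bdd (l t : ℕ) :
    BddBelow {x | ∃ q : Fin n → ℤ, l ≤ znn q ∧ znn q ≤ t ∧ x = approxErr A γ q ^ m} :=
  ⟨0, fun _ hx => errSet_nonneg _ hx⟩

lemma znn_const (hn : 0 < n) (l : ℕ) : znn (fun _ : Fin n => (l : ℤ)) = l := by
  haveI : Nonempty (Fin n) := ⟨⟨0, hn⟩⟩
  simp [znn, Finset.sup_const Finset.univ_nonempty]

lemma errSet_nonempty (hn : 0 < n) {l t : ℕ} (h : l ≤ t) :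
    Set.Nonempty {x | ∃ q : Fin n → ℤ, l ≤ znn q ∧ znn q ≤ t ∧ x = approxErr A γ q ^ m} :=
  ⟨approxErr A γ (fun _ => (l : ℤ)) ^ m, fun _ => (l : ℤ), by rw [znn_const hn],
    by rw [znn_const hn]; exact h, rfl⟩

lemma minErr_nonneg (l t : ℕ) : 0 ≤ minErr A γ l t :=
  Real.sInf_nonneg errSet_nonneg

lemma minErr_anti (hn : 0 < n) {l l' t : ℕ} (h : l ≤ l') (h' : l' ≤ t) :
    minErr A γ l t ≤ minErr A γ l' t := by
  refine csInf_le_csInf (errSet_bdd l t) (errSet_nonempty hn h') ?_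
  rintro x ⟨q, h1, h2, h3⟩
  exact ⟨q, h.trans h1, h2, h3⟩

lemma summable_of_eventually_le {f g : ℕ → ℝ} (hf : ∀ t, 0 ≤ f t)
    (h : ∀ᶠ t in atTop, f t ≤ g t) (hg : Summable g) : Summable f := by
  obtain ⟨N, hN⟩ := eventually_atTop.mp h
  rw [← summable_nat_add_iff N]
  exact Summable.of_nonneg_of_le (fun k => hf _) (fun k => hN _ (Nat.le_add_left N k))
    ((summable_nat_add_iff N).mpr hg)

end aux

theorem S_summable_all_or_none (m n : ℕ) (hm : 0 < m) (hn : 0 < n)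
    (A : Matrix (Fin m) (Fin n) ℝ) (γ : Fin m → ℝ)
    (hγ : ∀ i, 0 ≤ γ i ∧ γ i < 1)
    (hpos : ∀ q : Fin n → ℤ, q ≠ 0 → 0 < approxErr A γ q) :
    (∀ l : ℕ, 1 ≤ l →
        Summable (fun t : ℕ => if l ≤ t then (t : ℝ) ^ (n - 1) * minErr A γ l t else 0))
    ∨ (∀ l : ℕ, 1 ≤ l →
        ¬ Summable (fun t : ℕ => if l ≤ t then (t : ℝ) ^ (n - 1) * minErr A γ l t else 0)) := by
  set f : ℕ → ℕ → ℝ :=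
    fun l t => if l ≤ t then (t : ℝ) ^ (n - 1) * minErr A γ l t else 0 with hf
  have fnonneg : ∀ l t, 0 ≤ f l t := by
    intro l t
    simp only [hf]
    split
    · exact mul_nonneg (pow_nonneg (Nat.cast_nonneg t) _) (minErr_nonneg l t)
    · exact le_refl _
  have hard : ∀ l l' : ℕ, 1 ≤ l → l ≤ l' → Summable (f l) → Summable (f l') := by
    intro l l' hl hll' hsum
    set S : Set ℝ := insert 1 ((fun q : Fin n → ℤ => approxErr A γ q ^ m) ''
      {q | l ≤ znn q ∧ znn q < l'}) with hS
    have hFfin : {q : Fin n → ℤ | l ≤ znn q ∧ znn q < l'}.Finite := by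
      apply (Set.finite_Icc (fun _ : Fin n => -(l' : ℤ)) (fun _ => (l' : ℤ))).subset
      rintro q ⟨-, h2⟩
      rw [Set.mem_Icc]
      have h3 : ∀ i, (q i).natAbs ≤ znn q := fun i =>
        Finset.le_sup (f := fun i => (q i).natAbs) (Finset.mem_univ i)
      constructor
      · intro i
        show -(l' : ℤ) ≤ q i
        have := h3 i
        omega
      · intro i
        show q i ≤ (l' : ℤ)
        have := h3 i
        omega
    have hSfin : S.Finite := (hFfin.image _).insert 1
    have hSpos : ∀ x ∈ S, 0 < x := by
      rintro x (rfl | ⟨q, ⟨hq1, -⟩, rfl⟩)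
      · exact one_pos
      · refine pow_pos (hpos q ?_) m
        intro h0
        have h00 : znn (0 : Fin n → ℤ) = 0 :=
          Nat.le_zero.mp (Finset.sup_le fun i _ => le_refl 0)
        rw [h0, h00] at hq1
        omega
    set c : ℝ := sInf S with hc
    have hcS : c ∈ S := (Set.insert_nonempty _ _).csInf_mem hSfin
    have hcpos : 0 < c := hSpos c hcS
    have hlb : ∀ t, l ≤ t → min (minErr A γ l' t) c ≤ minErr A γ l t := by
      intro t ht
      refine le_csInf (errSet_nonempty hn ht) ?_
      rintro x ⟨q, h1, h2, rfl⟩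
      by_cases hq : l' ≤ znn q
      · exact (min_le_left _ _).trans (csInf_le (errSet_bdd l' t) ⟨q, hq, h2, rfl⟩)
      · refine (min_le_right _ _).trans ?_
        exact csInf_le hSfin.bddBelow (Set.mem_insert_of_mem _ ⟨q, ⟨h1, not_le.mp hq⟩, rfl⟩)
    have htend : Tendsto (fun t => minErr A γ l t) atTop (nhds 0) := by
      apply squeeze_zero' (Eventually.of_forall fun t => minErr_nonneg l t)
        ?_ hsum.tendsto_atTop_zero
      filter_upwards [eventually_ge_atTop l] with t ht
      simp only [hf, if_pos ht]
      refine le_mul_of_one_le_left (minErr_nonneg l t) ?_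
      exact one_le_pow₀ (by exact_mod_cast hl.trans ht)
    have hev : ∀ᶠ t in atTop, minErr A γ l t < c :=
      htend.eventually (eventually_lt_nhds hcpos)
    apply summable_of_eventually_le (fnonneg l') ?_ hsum
    filter_upwards [hev, eventually_ge_atTop l'] with t hlt htl'
    have htl : l ≤ t := hll'.trans htl'
    simp only [hf, if_pos htl', if_pos htl]
    refine mul_le_mul_of_nonneg_left ?_ (pow_nonneg (Nat.cast_nonneg t) _)
    have hmin := hlb t htl
    rcases le_or_gt (minErr A γ l' t) c with h | h
    · rwa [min_eq_left h] at hmin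
    · exfalso
      rw [min_eq_right h.le] at hmin
      exact absurd (hmin.trans_lt hlt) (lt_irrefl c)
  have easy : ∀ l l' : ℕ, 1 ≤ l → l ≤ l' → Summable (f l') → Summable (f l) := by
    intro l l' hl hll' hsum
    apply summable_of_eventually_le (fnonneg l) ?_ hsum
    filter_upwards [eventually_ge_atTop l'] with t htl'
    simp only [hf, if_pos (hll'.trans htl'), if_pos htl']
    exact mul_le_mul_of_nonneg_left (minErr_anti hn hll' htl') (pow_nonneg (Nat.cast_nonneg t) _)
  by_cases h1 : Summable (f 1)
  · exact Or.inl fun l hl => hard 1 l le_rfl hl h1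
  · exact Or.inr fun l hl hcon => h1 (easy 1 l le_rfl hl hcon)
end

section
/- Let m,n be positive integers. For every pair (A,γ) with A an m×n matrix in [0,1)^{m×n} and γ ∈ [0,1)^m, there exists a decreasing function ψ : ℕ → [0,∞) with ∑_{q≥1} q^{n-1} ψ(q)^m < ∞ such that ⟨Aq − γ⟩ < ψ(‖q‖) for infinitely many q ∈ ℤ^n, if and only if liminf_{‖q‖→∞, q ∈ ℤ^n} ‖q‖^n ⟨Aq − γ⟩^m = 0. -/
open Filter Topology

lemma approxErr_nonneg' {m n : ℕ} (A : Matrix (Fin m) (Fin n) ℝ) (γ : Fin m → ℝ)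
    (q : Fin n → ℤ) : 0 ≤ approxErr A γ q :=
  Real.iInf_nonneg fun _ => norm_nonneg _

lemma finite_znn_le' {n : ℕ} (N : ℕ) : {q : Fin n → ℤ | znn q ≤ N}.Finite := by
  apply Set.Finite.subset (Set.finite_Icc (fun _ : Fin n => -(N:ℤ)) (fun _ => (N:ℤ)))
  intro q hq
  simp only [Set.mem_setOf_eq] at hq
  constructor <;> intro i
  all_goals
    have h1 : (q i).natAbs ≤ znn q := Finset.le_sup (f := fun i => (q i).natAbs) (Finset.mem_univ i)
    simp only
    omega

lemma tendsto_pow_mul_of_summable' {n : ℕ} (hn : 0 < n) {a : ℕ → ℝ} (ha : Antitone a)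
    (ha0 : ∀ q, 0 ≤ a q) (hs : Summable (fun q : ℕ => (q : ℝ) ^ (n - 1) * a q)) :
    Tendsto (fun q : ℕ => (q : ℝ) ^ n * a q) atTop (𝓝 0) := by
  set f : ℕ → ℝ := fun q => (q : ℝ) ^ (n - 1) * a q with hf
  have hf0 : ∀ q, 0 ≤ f q := fun q => mul_nonneg (by positivity) (ha0 q)
  have hT : Tendsto (fun i => ∑' k, f (k + i)) atTop (𝓝 0) := tendsto_sum_nat_add f
  have hcomp : Tendsto (fun q : ℕ => q / 2 + 1) atTop atTop := by
    apply tendsto_atTop_atTop.mpr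
    intro b
    exact ⟨2 * b, fun a ha => by omega⟩
  have hT2 : Tendsto (fun q : ℕ => (2:ℝ)^n * ∑' k, f (k + (q / 2 + 1))) atTop (𝓝 0) := by
    have := (hT.comp hcomp).const_mul ((2:ℝ)^n)
    simpa using this
  apply squeeze_zero' (Eventually.of_forall fun q => mul_nonneg (by positivity) (ha0 q))
    _ hT2
  filter_upwards [eventually_ge_atTop 2] with q hq
  set j : ℕ := q / 2 + 1 with hj
  have hjq : j ≤ q := by omega
  have hsum : ∑ i ∈ Finset.range (q - j + 1), f (i + j) ≤ ∑' k, f (k + j) := by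
    exact Summable.sum_le_tsum _ (fun k _ => hf0 _) ((summable_nat_add_iff j).2 hs)
  have hterm : ∀ i ∈ Finset.range (q - j + 1), (j:ℝ)^(n-1) * a q ≤ f (i + j) := by
    intro i hi
    simp only [Finset.mem_range] at hi
    have h1 : (j:ℝ)^(n-1) ≤ ((i+j:ℕ):ℝ)^(n-1) := by
      apply pow_le_pow_left₀ (by positivity)
      exact_mod_cast Nat.le_add_left j i
    have h2 : a q ≤ a (i + j) := ha (by omega)
    exact mul_le_mul h1 h2 (ha0 q) (by positivity)
  have hlow : ((q - j + 1 : ℕ):ℝ) * ((j:ℝ)^(n-1) * a q) ≤ ∑ i ∈ Finset.range (q - j + 1), f (i + j) := by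
    calc ((q - j + 1 : ℕ):ℝ) * ((j:ℝ)^(n-1) * a q)
        = ∑ _i ∈ Finset.range (q - j + 1), (j:ℝ)^(n-1) * a q := by
          rw [Finset.sum_const, Finset.card_range, nsmul_eq_mul]
      _ ≤ _ := Finset.sum_le_sum hterm
  have hcard : (q:ℝ)/2 ≤ ((q - j + 1 : ℕ):ℝ) := by
    have h1 : ((q/2 : ℕ):ℝ) ≤ (q:ℝ)/2 := by
      rw [le_div_iff₀ (by norm_num)]
      exact_mod_cast Nat.div_mul_le_self q 2
    have h2 : (q - j + 1 : ℕ) = q - q/2 := by omega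
    rw [h2]
    have : ((q - q/2 : ℕ):ℝ) = (q:ℝ) - ((q/2:ℕ):ℝ) := by
      push_cast [Nat.cast_sub (by omega : q/2 ≤ q)]; ring
    rw [this]; linarith
  have hjhalf : (q:ℝ)/2 ≤ (j:ℝ) := by
    have h1 : q ≤ 2 * j := by omega
    have h2 : (q:ℝ) ≤ 2 * (j:ℝ) := by exact_mod_cast h1
    linarith
  have hmid : ((q:ℝ)/2)^n * a q ≤ ∑' k, f (k + j) := by
    have e1 : ((q:ℝ)/2)^n * a q = ((q:ℝ)/2) * (((q:ℝ)/2)^(n-1) * a q) := by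
      rw [← mul_assoc, ← pow_succ']
      congr 2
      omega
    rw [e1]
    calc ((q:ℝ)/2) * (((q:ℝ)/2)^(n-1) * a q)
        ≤ ((q - j + 1 : ℕ):ℝ) * ((j:ℝ)^(n-1) * a q) := by
          apply mul_le_mul hcard _ (mul_nonneg (by positivity) (ha0 q)) (by positivity)
          exact mul_le_mul (pow_le_pow_left₀ (by positivity) hjhalf _) le_rfl (ha0 q) (by positivity)
      _ ≤ _ := le_trans hlow hsum
  calc (q:ℝ)^n * a q = (2:ℝ)^n * (((q:ℝ)/2)^n * a q) := by
        rw [div_pow]; field_simp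
    _ ≤ (2:ℝ)^n * ∑' k, f (k + j) := mul_le_mul_of_nonneg_left hmid (by positivity)

theorem lambda_eq_not_bad (m n : ℕ) (hm : 0 < m) (hn : 0 < n)
    (A : Matrix (Fin m) (Fin n) ℝ) (γ : Fin m → ℝ)
    (hA : ∀ i j, 0 ≤ A i j ∧ A i j < 1) (hγ : ∀ i, 0 ≤ γ i ∧ γ i < 1) :
    (∃ ψ : ℕ → ℝ, Antitone ψ ∧ (∀ q, 0 ≤ ψ q) ∧
        Summable (fun q : ℕ => (q : ℝ) ^ (n - 1) * ψ q ^ m) ∧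
        {q : Fin n → ℤ | approxErr A γ q < ψ (znn q)}.Infinite)
    ↔ (∀ ε : ℝ, 0 < ε → ∀ N : ℕ, ∃ q : Fin n → ℤ,
        N ≤ znn q ∧ (znn q : ℝ) ^ n * approxErr A γ q ^ m < ε) := by
  constructor
  · rintro ⟨ψ, hanti, hpos, hsum, hinf⟩ ε hε N
    have haa : Antitone (fun q : ℕ => ψ q ^ m) :=
      fun i j hij => pow_le_pow_left₀ (hpos j) (hanti hij) m
    have ht0 : Tendsto (fun q : ℕ => (q:ℝ)^n * ψ q ^ m) atTop (𝓝 0) :=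
      tendsto_pow_mul_of_summable' hn haa (fun q => pow_nonneg (hpos q) m) hsum
    obtain ⟨T, hT⟩ := (ht0.eventually_lt_const hε).exists_forall_of_atTop
    obtain ⟨q, hqS, hq⟩ : ∃ q ∈ {q : Fin n → ℤ | approxErr A γ q < ψ (znn q)},
        ¬ znn q ≤ max N T := by
      by_contra hcon
      push_neg at hcon
      exact hinf (Set.Finite.subset (finite_znn_le' (max N T)) hcon)
    refine ⟨q, by omega, ?_⟩
    calc (znn q : ℝ)^n * approxErr A γ q ^ m
        ≤ (znn q : ℝ)^n * ψ (znn q) ^ m := by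
          apply mul_le_mul_of_nonneg_left _ (by positivity)
          exact pow_le_pow_left₀ (approxErr_nonneg' A γ q) (le_of_lt hqS) m
      _ < ε := hT (znn q) (by omega)
  · intro H
    choose Q hQ1 hQ2 using fun (k N : ℕ) => H (((1:ℝ)/2)^k) (by positivity) N
    set R : ℕ → (Fin n → ℤ) :=
      fun k => Nat.rec (Q 0 1) (fun k ih => Q (k+1) (znn ih + 1)) k with hR
    set t : ℕ → ℕ := fun k => znn (R k) with ht
    have ht1 : 1 ≤ t 0 := hQ1 0 1
    have htsucc : ∀ k, t k + 1 ≤ t (k+1) := fun k => hQ1 (k+1) (t k + 1)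
    have htmono : StrictMono t := strictMono_nat_of_lt_succ (fun k => by
      have := htsucc k; omega)
    have htk : ∀ k, k + 1 ≤ t k := by
      intro k
      induction k with
      | zero => exact ht1
      | succ k ih => have := htsucc k; omega
    have htpos : ∀ k, (0:ℝ) < (t k : ℝ)^n := by
      intro k
      have h0 : (0:ℝ) < (t k : ℝ) := by
        have := htk k
        exact_mod_cast (show 0 < t k by omega)
      positivity
    have hbound : ∀ k, (t k : ℝ)^n * approxErr A γ (R k) ^ m < ((1:ℝ)/2)^k := by
      intro k
      cases k with
      | zero => exact hQ2 0 1
      | succ k => exact hQ2 (k+1) (t k + 1)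
    have hex : ∀ j : ℕ, ∃ k, j ≤ t k := fun j => ⟨j, by have := htk j; omega⟩
    set K : ℕ → ℕ := fun j => Nat.find (hex j) with hK
    have hKle : ∀ j, j ≤ t (K j) := fun j => Nat.find_spec (hex j)
    have hKmono : Monotone K := fun i j hij => Nat.find_mono (fun k hk => le_trans hij hk)
    have hKt : ∀ k, K (t k) ≤ k := fun k => Nat.find_le le_rfl
    set b : ℕ → ℝ := fun j => ((1:ℝ)/2)^(K j) / (t (K j) : ℝ)^n with hb
    have hstep : ∀ k k' : ℕ, k ≤ k' →
        ((1:ℝ)/2)^k' / (t k' : ℝ)^n ≤ ((1:ℝ)/2)^k / (t k : ℝ)^n := by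
      intro k k' hkk
      apply div_le_div₀ (by positivity)
      · exact pow_le_pow_of_le_one (by norm_num) (by norm_num) hkk
      · exact htpos k
      · exact pow_le_pow_left₀ (by positivity) (by exact_mod_cast (htmono.monotone hkk)) n
    have hbpos : ∀ j, 0 < b j := fun j => div_pos (by positivity) (htpos (K j))
    have hbanti : Antitone b := fun i j hij => hstep _ _ (hKmono hij)
    set ψ : ℕ → ℝ := fun j => (b j) ^ ((m:ℝ)⁻¹) with hψ
    have hψm : ∀ j, ψ j ^ m = b j := by
      intro j
      rw [hψ]
      rw [← Real.rpow_natCast ((b j) ^ ((m:ℝ)⁻¹)) m, ← Real.rpow_mul (hbpos j).le,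
        inv_mul_cancel₀ (by exact_mod_cast hm.ne'), Real.rpow_one]
    have hψpos : ∀ j, 0 < ψ j := fun j => Real.rpow_pos_of_pos (hbpos j) _
    refine ⟨ψ, ?_, fun j => (hψpos j).le, ?_, ?_⟩
    · intro i j hij
      exact Real.rpow_le_rpow (hbpos j).le (hbanti hij) (by positivity)
    · -- summability
      apply summable_of_sum_range_le
        (c := 4) (fun q => mul_nonneg (by positivity) (by positivity))
      intro QQ
      have hmaps : ∀ q ∈ Finset.range QQ, K q ∈ Finset.range QQ := by
        intro q hq
        simp only [Finset.mem_range] at *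
        have : K q ≤ q := Nat.find_le (by have := htk q; omega)
        omega
      rw [← Finset.sum_fiberwise_of_maps_to hmaps]
      have hfiber : ∀ k ∈ Finset.range QQ,
          ∑ q ∈ (Finset.range QQ).filter (fun q => K q = k), (q:ℝ)^(n-1) * ψ q ^ m
            ≤ 2 * ((1:ℝ)/2)^k := by
        intro k _
        have hsub : (Finset.range QQ).filter (fun q => K q = k) ⊆ Finset.range (t k + 1) := by
          intro q hq
          simp only [Finset.mem_filter, Finset.mem_range] at *
          have := hKle q
          rw [hq.2] at this
          omega
        have hbd : ∀ q ∈ (Finset.range QQ).filter (fun q => K q = k),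
            (q:ℝ)^(n-1) * ψ q ^ m ≤ (t k:ℝ)^(n-1) * (((1:ℝ)/2)^k / (t k:ℝ)^n) := by
          intro q hq
          simp only [Finset.mem_filter] at hq
          rw [hψm, hb]
          simp only [hq.2]
          apply mul_le_mul _ le_rfl (le_of_lt (div_pos (by positivity) (htpos k))) (by positivity)
          apply pow_le_pow_left₀ (by positivity)
          have h1 := hKle q
          rw [hq.2] at h1
          exact_mod_cast h1
        calc ∑ q ∈ (Finset.range QQ).filter (fun q => K q = k), (q:ℝ)^(n-1) * ψ q ^ m
            ≤ ∑ _q ∈ (Finset.range QQ).filter (fun q => K q = k),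
                (t k:ℝ)^(n-1) * (((1:ℝ)/2)^k / (t k:ℝ)^n) := Finset.sum_le_sum hbd
          _ = ((Finset.range QQ).filter (fun q => K q = k)).card *
                ((t k:ℝ)^(n-1) * (((1:ℝ)/2)^k / (t k:ℝ)^n)) := by
              rw [Finset.sum_const, nsmul_eq_mul]
          _ ≤ ((t k + 1 : ℕ):ℝ) * ((t k:ℝ)^(n-1) * (((1:ℝ)/2)^k / (t k:ℝ)^n)) := by
              apply mul_le_mul_of_nonneg_right _ (by positivity)
              exact_mod_cast le_trans (Finset.card_le_card hsub) (by rw [Finset.card_range])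
          _ ≤ 2 * ((1:ℝ)/2)^k := by
              have htr : (1:ℝ) ≤ (t k : ℝ) := by exact_mod_cast le_trans (by omega) (htk k)
              have hne : (t k:ℝ) ≠ 0 := by linarith
              have hpow : (t k:ℝ)^n = (t k:ℝ)^(n-1) * (t k:ℝ) := by
                rw [← pow_succ]
                congr 1
                omega
              rw [hpow]
              have hne1 : (t k:ℝ)^(n-1) ≠ 0 := by positivity
              push_cast
              have e : ((t k:ℝ) + 1) * ((t k:ℝ)^(n-1) * (((1:ℝ)/2)^k /
                  ((t k:ℝ)^(n-1) * (t k:ℝ))))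
                  = ((t k:ℝ) + 1) / (t k:ℝ) * ((1:ℝ)/2)^k := by
                field_simp
              rw [e]
              apply mul_le_mul_of_nonneg_right _ (by positivity)
              rw [div_le_iff₀ (by linarith)]
              linarith
      calc ∑ k ∈ Finset.range QQ,
            ∑ q ∈ (Finset.range QQ).filter (fun q => K q = k), (q:ℝ)^(n-1) * ψ q ^ m
          ≤ ∑ k ∈ Finset.range QQ, 2 * ((1:ℝ)/2)^k := Finset.sum_le_sum hfiber
        _ = 2 * ∑ k ∈ Finset.range QQ, ((1:ℝ)/2)^k := by rw [Finset.mul_sum]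
        _ ≤ 2 * 2 := mul_le_mul_of_nonneg_left (sum_geometric_two_le QQ) (by norm_num)
        _ = 4 := by norm_num
    · -- infinite
      apply Set.infinite_of_injective_forall_mem (f := R)
      · intro i j hij
        exact htmono.injective (by rw [ht]; simp only [hij])
      · intro k
        simp only [Set.mem_setOf_eq]
        have h2 : approxErr A γ (R k) ^ m < ((1:ℝ)/2)^k / (t k:ℝ)^n := by
          rw [lt_div_iff₀ (htpos k), mul_comm]
          exact hbound k
        have h3 : ((1:ℝ)/2)^k / (t k:ℝ)^n ≤ b (t k) := hstep _ _ (hKt k)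
        have h1 : approxErr A γ (R k) ^ m < b (znn (R k)) := lt_of_lt_of_le h2 h3
        apply lt_of_pow_lt_pow_left₀ m (hψpos _).le
        rw [hψm]
        exact h1
end
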